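/- For every n ≥ 3, the automorphism group of the graph Γ_n is isomorphic, as a group, to the symmetric group on n letters; explicitly, every graph automorphism of Γ_n is induced by a unique permutation σ of {1,…,n} acting on vertices by B ↦ σ(B). -/

import Mathlib

/-- Vertices of Γₙ: nonempty proper subsets of {1,…,n}. -/
def GammaVert (n : ℕ) := {B : Finset (Fin n) // B.Nonempty ∧ B ≠ Finset.univ}

/-- The graph Γₙ: two distinct nonempty proper subsets adjacent iff disjoint. -/
def GammaGraph (n : ℕ) : SimpleGraph (GammaVert n) where
  Adj B C := B ≠ C ∧ Disjoint B.1 C.1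
  symm := ⟨fun _ _ ⟨h1, h2⟩ => ⟨h1.symm, h2.symm⟩⟩
  loopless := ⟨fun _ h => h.1 rfl⟩

/-!
A vertex `B` of `Γₙ` is a singleton exactly when no other vertex is adjacent to every neighbour
of `B` (the only vertex disjoint from `{i}ᶜ` is `{i}`), a property preserved by automorphisms.
So an automorphism permutes the singletons, which gives a permutation `σ` of the points, and
since `{i}` is adjacent to `B` iff `i ∉ B`, the automorphism is `B ↦ σ(B)`.
-/

namespace SimpleGraph

variable {V W : Type*} {G : SimpleGraph V} {H : SimpleGraph W}

def IsNeighborSetMaximal (G : SimpleGraph V) (v : V) : Prop :=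
  ∀ w, G.neighborSet v ⊆ G.neighborSet w → w = v

theorem Iso.isNeighborSetMaximal_apply (f : G ≃g H) {v : V} (hv : G.IsNeighborSetMaximal v) :
    H.IsNeighborSetMaximal (f v) := by
  intro w hw
  suffices f.symm w = v by rw [← this, f.apply_symm_apply]
  refine hv _ fun u hu => ?_
  have : H.Adj w (f u) := hw (f.map_adj_iff.mpr hu)
  simpa using f.symm.map_adj_iff.mpr this

end SimpleGraph

namespace GammaVert

variable {n : ℕ}

theorem ext {B C : GammaVert n} (h : B.1 = C.1) : B = C := Subtype.ext h

def permCongr (σ : Equiv.Perm (Fin n)) : GammaVert n ≃ GammaVert n :=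
  σ.finsetCongr.subtypeEquiv fun B => by
    nth_rw 2 [← Finset.map_univ_equiv σ]
    simp only [Equiv.finsetCongr_apply, Finset.map_nonempty, Ne, Finset.map_inj]

theorem permCongr_apply_val (σ : Equiv.Perm (Fin n)) (B : GammaVert n) :
    (permCongr σ B).1 = B.1.image σ :=
  Finset.map_eq_image _ _

variable [Nontrivial (Fin n)]

def single (i : Fin n) : GammaVert n :=
  ⟨{i}, Finset.singleton_nonempty i, Finset.singleton_ne_univ i⟩

def complSingle (i : Fin n) : GammaVert n :=
  ⟨{i}ᶜ, Finset.nonempty_iff_ne_empty.mpr (by simp), by simp⟩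

theorem single_injective : Function.Injective (single : Fin n → GammaVert n) :=
  fun _ _ h => Finset.singleton_injective (congrArg Subtype.val h)

end GammaVert

namespace GammaGraph

open GammaVert

variable {n : ℕ}

theorem adj_iff {B C : GammaVert n} : (GammaGraph n).Adj B C ↔ B ≠ C ∧ Disjoint B.1 C.1 :=
  Iff.rfl

def permAut : Equiv.Perm (Fin n) →* (GammaGraph n ≃g GammaGraph n) where
  toFun σ := ⟨permCongr σ, fun {B C} => by
    simp only [adj_iff, Ne, (permCongr σ).injective.eq_iff, permCongr_apply_val,
      Finset.disjoint_image σ.injective]⟩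
  map_one' := RelIso.ext fun B => ext (by simp [permCongr_apply_val])
  map_mul' σ τ := RelIso.ext fun B => ext (by simp [permCongr_apply_val, Finset.image_image])

theorem permAut_apply_val (σ : Equiv.Perm (Fin n)) (B : GammaVert n) :
    (permAut σ B).1 = B.1.image σ :=
  permCongr_apply_val σ B

variable [Nontrivial (Fin n)]

theorem single_adj_iff {i : Fin n} {B : GammaVert n} :
    (GammaGraph n).Adj (single i) B ↔ i ∉ B.1 := by
  refine ⟨fun h => Finset.disjoint_singleton_left.mp h.2, fun hi => ⟨?_, ?_⟩⟩
  · rintro rfl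
    exact hi (Finset.mem_singleton_self i)
  · exact Finset.disjoint_singleton_left.mpr hi

theorem isNeighborSetMaximal_single (i : Fin n) :
    (GammaGraph n).IsNeighborSetMaximal (single i) := by
  intro C hC
  have hadj : (GammaGraph n).Adj C (complSingle i) :=
    hC (single_adj_iff.mpr (by simp [complSingle]))
  exact ext (C.2.1.subset_singleton_iff.mp (disjoint_compl_right_iff.mp hadj.2))

theorem exists_eq_single_of_isNeighborSetMaximal {B : GammaVert n}
    (hB : (GammaGraph n).IsNeighborSetMaximal B) : ∃ i, B = single i := by
  obtain ⟨i, hi⟩ := B.2.1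
  refine ⟨i, Eq.symm <| hB _ fun C hC => single_adj_iff.mpr fun hiC => ?_⟩
  exact Finset.disjoint_left.mp hC.2 hi hiC

theorem exists_apply_single_eq_single (f : GammaGraph n ≃g GammaGraph n) (i : Fin n) :
    ∃ j, f (single i) = single j :=
  exists_eq_single_of_isNeighborSetMaximal
    (f.isNeighborSetMaximal_apply (isNeighborSetMaximal_single i))

theorem mem_apply_iff_of_apply_single (f : GammaGraph n ≃g GammaGraph n) {i j : Fin n}
    (h : f (single i) = single j) (B : GammaVert n) : j ∈ (f B).1 ↔ i ∈ B.1 := by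
  rw [← not_iff_not, ← single_adj_iff, ← single_adj_iff, ← h, f.map_adj_iff]

theorem permAut_single (σ : Equiv.Perm (Fin n)) (i : Fin n) :
    permAut σ (single i) = single (σ i) :=
  ext ((permAut_apply_val σ (single i)).trans (Finset.image_singleton σ i))

theorem permAut_injective : Function.Injective (permAut : Equiv.Perm (Fin n) → _) := by
  intro σ τ h
  ext i : 1
  apply single_injective
  rw [← permAut_single, ← permAut_single, h]

theorem exists_permAut_eq (f : GammaGraph n ≃g GammaGraph n) : ∃ σ, permAut σ = f := by
  choose s hs using exists_apply_single_eq_single f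
  have hs_inj : Function.Injective s := fun i j hij =>
    single_injective (f.injective ((hs i).trans (hij ▸ (hs j).symm)))
  let σ := Equiv.ofBijective s (Finite.injective_iff_bijective.mp hs_inj)
  refine ⟨σ, RelIso.ext fun B => ext (Finset.ext fun x => ?_)⟩
  obtain ⟨i, rfl⟩ := σ.surjective x
  rw [permAut_apply_val, σ.injective.mem_finset_image]
  exact (mem_apply_iff_of_apply_single f (hs i) B).symm

end GammaGraph

/-- For n ≥ 3, the automorphism group of Γₙ is isomorphic as a group to the
symmetric group on n letters: there is a composition-compatible bijection F from
graph automorphisms of Γₙ to permutations of {1,…,n} such that every automorphism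
f acts on vertices by B ↦ (F f)(B), and F f is the unique such permutation. -/
theorem gammaGraph_automorphism_group (n : ℕ) (hn : 3 ≤ n) :
    ∃ F : (GammaGraph n ≃g GammaGraph n) ≃ Equiv.Perm (Fin n),
      (∀ f g : GammaGraph n ≃g GammaGraph n, F (f.trans g) = F g * F f) ∧
      (∀ f : GammaGraph n ≃g GammaGraph n, ∀ B : GammaVert n,
        (f B).1 = B.1.image (F f)) ∧
      (∀ f : GammaGraph n ≃g GammaGraph n, ∀ σ : Equiv.Perm (Fin n),
        (∀ B : GammaVert n, (f B).1 = B.1.image σ) → σ = F f) := by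
  have : Nontrivial (Fin n) := Fin.nontrivial_iff_two_le.mpr (by omega)
  let e := (MulEquiv.ofBijective (GammaGraph.permAut (n := n))
    ⟨GammaGraph.permAut_injective, GammaGraph.exists_permAut_eq⟩).symm
  have he (f : GammaGraph n ≃g GammaGraph n) : GammaGraph.permAut (e f) = f :=
    e.symm_apply_apply f
  -- `f.trans g` is the product `g * f` in the automorphism group
  refine ⟨e.toEquiv, fun f g => map_mul e g f, fun f B => ?_, fun f σ hσ => ?_⟩
  · have := GammaGraph.permAut_apply_val (e f) B
    rwa [he] at this
  · exact e.symm_apply_eq.mp (RelIso.ext fun B =>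
      GammaVert.ext ((GammaGraph.permAut_apply_val σ B).trans (hσ B).symm))
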